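/- arXiv:1303.6397 — 3 statements merged into one kernel-verified Lean document; each statement's English description precedes it below -/
import Mathlib

section
/- For matrices L ∈ R^{N×N} and H ∈ R^{m×n}, and Ā = I_N ⊗ A, the unobservable subspace of the pair (L ⊗ H, Ā), i.e., ⋂_{l=1}^{nN} Ker((L ⊗ H) Ā^{l-1}), equals Ker(L ⊗ O_H), where O_H = [H' (HA)' ... (HA^{n-1})']' is the observability matrix of (H,A). -/
open Matrix Kronecker

/-- The observability matrix `O_H = [H' (HA)' … (HA^{n-1})']'` of the pair `(H,A)`. -/
def obsMat {n m : ℕ} (A : Matrix (Fin n) (Fin n) ℝ) (H : Matrix (Fin m) (Fin n) ℝ) :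
    Matrix (Fin n × Fin m) (Fin n) ℝ :=
  Matrix.of fun p c => (H * A ^ (p.1 : ℕ)) p.2 c

open Polynomial in
/-- Every power of `A` lies in the span of `A^0, …, A^{n-1}` (Cayley–Hamilton). -/
lemma pow_mem_span {n : ℕ} (A : Matrix (Fin n) (Fin n) ℝ) (l : ℕ) :
    A ^ l ∈ Submodule.span ℝ (Set.range fun p : Fin n => A ^ (p : ℕ)) := by
  rcases Nat.eq_zero_or_pos n with hn | hn
  · subst hn
    have : A ^ l = 0 := Subsingleton.elim _ _
    rw [this]; exact Submodule.zero_mem _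
  · rw [Matrix.pow_eq_aeval_mod_charpoly A l]
    have hnd : A.charpoly.natDegree = n := by
      rw [Matrix.charpoly_natDegree_eq_dim, Fintype.card_fin]
    have hq1 : A.charpoly ≠ 1 := by
      intro h
      rw [h, Polynomial.natDegree_one] at hnd
      omega
    have hdeg : (X ^ l %ₘ A.charpoly).natDegree < n := by
      have := Polynomial.natDegree_modByMonic_lt (X ^ l) (Matrix.charpoly_monic A) hq1
      omega
    rw [Polynomial.aeval_eq_sum_range' hdeg]
    exact Submodule.sum_mem _ fun i hi => Submodule.smul_mem _ _
      (Submodule.subset_span ⟨⟨i, Finset.mem_range.mp hi⟩, rfl⟩)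

/-- The identity `(L ⊗ H)(I_N ⊗ A)^l = L ⊗ (H A^l)`. -/
lemma kron_pow_eq {n N m : ℕ} (A : Matrix (Fin n) (Fin n) ℝ) (H : Matrix (Fin m) (Fin n) ℝ)
    (L : Matrix (Fin N) (Fin N) ℝ) (l : ℕ) :
    (L ⊗ₖ H) * ((1 : Matrix (Fin N) (Fin N) ℝ) ⊗ₖ A) ^ l = L ⊗ₖ (H * A ^ l) := by
  have h1 : ∀ k : ℕ, ((1 : Matrix (Fin N) (Fin N) ℝ) ⊗ₖ A) ^ k
      = (1 : Matrix (Fin N) (Fin N) ℝ) ⊗ₖ (A ^ k) := by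
    intro k
    induction k with
    | zero => simp [Matrix.one_kronecker_one]
    | succ k ih => rw [pow_succ, ih, ← Matrix.mul_kronecker_mul, one_mul, pow_succ]
  rw [h1, ← Matrix.mul_kronecker_mul, mul_one]

/-- Membership in `Ker(L ⊗ O_H)` amounts to membership in all `Ker(L ⊗ (H A^p))`, `p < n`. -/
lemma obs_ker {n N m : ℕ} (A : Matrix (Fin n) (Fin n) ℝ) (H : Matrix (Fin m) (Fin n) ℝ)
    (L : Matrix (Fin N) (Fin N) ℝ) (x : Fin N × Fin n → ℝ) :
    (L ⊗ₖ obsMat A H).mulVec x = 0 ↔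
      ∀ p : Fin n, (L ⊗ₖ (H * A ^ (p : ℕ))).mulVec x = 0 := by
  have key : ∀ (i : Fin N) (p : Fin n) (q : Fin m),
      (L ⊗ₖ obsMat A H).mulVec x (i, (p, q)) =
        (L ⊗ₖ (H * A ^ (p : ℕ))).mulVec x (i, q) := by
    intro i p q
    simp [Matrix.mulVec, dotProduct, Matrix.kroneckerMap_apply, obsMat]
  constructor
  · intro h p
    funext iq
    obtain ⟨i, q⟩ := iq
    rw [← key i p q, h]
    rfl
  · intro h
    funext ipq
    obtain ⟨i, p, q⟩ := ipq
    rw [key i p q, h p]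
    rfl

/-- The unobservable subspace of the pair `(L ⊗ H, Ā)`, `Ā = I_N ⊗ A`, i.e.
`⋂_{l=1}^{nN} Ker((L ⊗ H) Ā^{l-1})`, equals `Ker(L ⊗ O_H)`. -/
theorem unobservable_kron_eq_ker_kron_obsMat {n N m : ℕ}
    (A : Matrix (Fin n) (Fin n) ℝ) (H : Matrix (Fin m) (Fin n) ℝ)
    (L : Matrix (Fin N) (Fin N) ℝ) :
    {x : Fin N × Fin n → ℝ |
        ∀ l < n * N,
          ((L ⊗ₖ H) * ((1 : Matrix (Fin N) (Fin N) ℝ) ⊗ₖ A) ^ l).mulVec x = 0} =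
      {x : Fin N × Fin n → ℝ | (L ⊗ₖ obsMat A H).mulVec x = 0} := by
  ext x
  simp only [Set.mem_setOf_eq, kron_pow_eq, obs_ker]
  constructor
  · intro h p
    rcases Nat.eq_zero_or_pos N with hN | hN
    · subst hN
      funext iq
      exact absurd iq.1.2 (Nat.not_lt_zero _)
    · exact h p (lt_of_lt_of_le p.2 (Nat.le_mul_of_pos_right n hN))
  · intro h l _
    have hspan := pow_mem_span A l
    have P : ∀ M ∈ Submodule.span ℝ (Set.range fun p : Fin n => A ^ (p : ℕ)),
        (L ⊗ₖ (H * M)).mulVec x = 0 := by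
      intro M hM
      induction hM using Submodule.span_induction with
      | mem M hM => obtain ⟨p, rfl⟩ := hM; exact h p
      | zero => simp
      | add M M' _ _ hM hM' =>
          rw [Matrix.mul_add, Matrix.kronecker_add, Matrix.add_mulVec, hM, hM', add_zero]
      | smul r M _ hM =>
          rw [Matrix.mul_smul, Matrix.kronecker_smul, Matrix.smul_mulVec, hM, smul_zero]
    exact P _ hspan
end

section
/- The pair ([C̄', H̄']', Ā) is detectable if and only if ŌH ∩ ∏_{i=1}^N C_i^u = {0}, where ŌH is the unobservable subspace of (H̄, Ā) and C_i^u is the undetectable subspace of (C_i, A). -/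
/-!
`Ā = I_N ⊗ A` acts blockwise, so `C̄ Āˡ x = 0` and `α⁺(Ā) x = 0` split into the block conditions
`C_i Aˡ x_i = 0` and `α⁺(A) x_i = 0`. By Cayley–Hamilton, vanishing for `l < nN` (resp. `l < n`)
is the same as vanishing for every `l`, so both sides quantify over the same set of vectors.
-/

open Matrix Kronecker Polynomial

/-- Block diagonal matrix `C̄ = diag[C_1, …, C_N]` acting on block vectors. -/
def Cbar {N n : ℕ} (m : Fin N → ℕ) (C : ∀ i, Matrix (Fin (m i)) (Fin n) ℝ) :
    Matrix ((i : Fin N) × Fin (m i)) (Fin N × Fin n) ℝ :=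
  Matrix.of fun p q => if p.1 = q.1 then C p.1 p.2 q.2 else 0

namespace Matrix

section CayleyHamilton

variable {R ι κ : Type*} [CommRing R] [Nontrivial R] [Fintype ι] [DecidableEq ι]

/-- By Cayley–Hamilton every power of `M` is a combination of the powers below `card ι`. -/
theorem mul_pow_mulVec_eq_zero_of_forall_lt_card (B : Matrix κ ι R) (M : Matrix ι ι R)
    (v : ι → R) (h : ∀ k < Fintype.card ι, (B * M ^ k) *ᵥ v = 0) (l : ℕ) :
    (B * M ^ l) *ᵥ v = 0 := by
  rcases isEmpty_or_nonempty ι with hι | hι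
  · simp [Subsingleton.elim v 0]
  have hdeg : (X ^ l %ₘ M.charpoly).natDegree < Fintype.card ι := by
    have hne : M.charpoly ≠ 1 := fun h1 => by
      simpa [h1, eq_comm, Fintype.card_ne_zero] using M.charpoly_natDegree_eq_dim
    simpa using natDegree_modByMonic_lt (X ^ l) M.charpoly_monic hne
  rw [pow_eq_aeval_mod_charpoly, aeval_eq_sum_range' hdeg]
  simp only [Matrix.mul_sum, Matrix.mul_smul, sum_mulVec, smul_mulVec]
  exact Finset.sum_eq_zero fun k hk => by rw [h k (Finset.mem_range.mp hk), smul_zero]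

theorem forall_lt_card_mul_pow_mulVec_eq_zero_iff (B : Matrix κ ι R) (M : Matrix ι ι R)
    (v : ι → R) :
    (∀ k < Fintype.card ι, (B * M ^ k) *ᵥ v = 0) ↔ ∀ k, (B * M ^ k) *ᵥ v = 0 :=
  ⟨mul_pow_mulVec_eq_zero_of_forall_lt_card B M v, fun h k _ => h k⟩

end CayleyHamilton

section OneKronecker

variable {R l n : Type*} [Fintype l] [DecidableEq l] [Fintype n]

theorem one_kronecker_mulVec_apply [NonAssocSemiring R] (M : Matrix n n R) (x : l × n → R)
    (i : l) (j : n) :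
    ((1 : Matrix l l R) ⊗ₖ M *ᵥ x) (i, j) = (M *ᵥ fun k => x (i, k)) j := by
  simp [mulVec, dotProduct, Fintype.sum_prod_type, kroneckerMap_apply, one_apply, ite_mul]

theorem one_kronecker_mulVec_eq_zero_iff [NonAssocSemiring R] (M : Matrix n n R)
    (x : l × n → R) :
    (1 : Matrix l l R) ⊗ₖ M *ᵥ x = 0 ↔ ∀ i, M *ᵥ (fun j => x (i, j)) = 0 := by
  simp only [funext_iff, Prod.forall, one_kronecker_mulVec_apply, Pi.zero_apply]

variable [DecidableEq n] (R l) [CommSemiring R]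

def oneKroneckerAlgHom : Matrix n n R →ₐ[R] Matrix (l × n) (l × n) R where
  toFun M := (1 : Matrix l l R) ⊗ₖ M
  map_one' := one_kronecker_one
  map_mul' M M' := by rw [← mul_kronecker_mul, Matrix.one_mul]
  map_zero' := kronecker_zero _
  map_add' := kronecker_add _
  commutes' r := by
    simp only [Algebra.algebraMap_eq_smul_one, kronecker_smul, one_kronecker_one]

variable {R l}

theorem one_kronecker_pow (M : Matrix n n R) (k : ℕ) :
    ((1 : Matrix l l R) ⊗ₖ M) ^ k = 1 ⊗ₖ (M ^ k) :=
  (map_pow (oneKroneckerAlgHom R l) M k).symm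

theorem aeval_one_kronecker (M : Matrix n n R) (p : R[X]) :
    aeval ((1 : Matrix l l R) ⊗ₖ M) p = 1 ⊗ₖ aeval M p :=
  aeval_algHom_apply (oneKroneckerAlgHom R l) M p

end OneKronecker

end Matrix

section Cbar

variable {N n : ℕ} {m : Fin N → ℕ} {C : ∀ i, Matrix (Fin (m i)) (Fin n) ℝ}

theorem cbar_mulVec_eq_zero_iff (y : Fin N × Fin n → ℝ) :
    Cbar m C *ᵥ y = 0 ↔ ∀ i, C i *ᵥ (fun j => y (i, j)) = 0 := by
  have happly : ∀ i a, (Cbar m C *ᵥ y) ⟨i, a⟩ = (C i *ᵥ fun j => y (i, j)) a := by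
    simp [Cbar, mulVec, dotProduct, Fintype.sum_prod_type, ite_mul]
  simp only [funext_iff, Sigma.forall, happly, Pi.zero_apply]

theorem cbar_mul_one_kronecker_mulVec_eq_zero_iff (M : Matrix (Fin n) (Fin n) ℝ)
    (x : Fin N × Fin n → ℝ) :
    (Cbar m C * ((1 : Matrix (Fin N) (Fin N) ℝ) ⊗ₖ M)) *ᵥ x = 0 ↔
      ∀ i, (C i * M) *ᵥ (fun j => x (i, j)) = 0 := by
  rw [← mulVec_mulVec, cbar_mulVec_eq_zero_iff]
  simp only [← mulVec_mulVec, one_kronecker_mulVec_apply]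

theorem forall_lt_cbar_mul_one_kronecker_pow_mulVec_eq_zero_iff (A : Matrix (Fin n) (Fin n) ℝ)
    (x : Fin N × Fin n → ℝ) :
    (∀ l < n * N, (Cbar m C * ((1 : Matrix (Fin N) (Fin N) ℝ) ⊗ₖ A) ^ l) *ᵥ x = 0) ↔
      ∀ i, ∀ l < n, (C i * A ^ l) *ᵥ (fun j => x (i, j)) = 0 := by
  have hcard : n * N = Fintype.card (Fin N × Fin n) := by simp [mul_comm]
  have hblock (i : Fin N) :
      (∀ l < n, (C i * A ^ l) *ᵥ (fun j => x (i, j)) = 0) ↔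
        ∀ l, (C i * A ^ l) *ᵥ (fun j => x (i, j)) = 0 := by
    simpa using forall_lt_card_mul_pow_mulVec_eq_zero_iff (C i) A (fun j => x (i, j))
  rw [hcard, forall_lt_card_mul_pow_mulVec_eq_zero_iff, forall_congr' hblock, forall_comm]
  simp only [one_kronecker_pow, cbar_mul_one_kronecker_mulVec_eq_zero_iff]

end Cbar

theorem detectable_iff_unobs_inter_prod_undet_general {n N : ℕ}
    (A : Matrix (Fin n) (Fin n) ℝ)
    (m : Fin N → ℕ) (C : ∀ i, Matrix (Fin (m i)) (Fin n) ℝ)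
    {q : ℕ} (Hbar : Matrix (Fin q) (Fin N × Fin n) ℝ)
    (aplus : Polynomial ℝ) :
    (∀ x : Fin N × Fin n → ℝ,
        (∀ l < n * N,
            (Cbar m C * ((1 : Matrix (Fin N) (Fin N) ℝ) ⊗ₖ A) ^ l).mulVec x = 0 ∧
            (Hbar * ((1 : Matrix (Fin N) (Fin N) ℝ) ⊗ₖ A) ^ l).mulVec x = 0) →
        (aeval ((1 : Matrix (Fin N) (Fin N) ℝ) ⊗ₖ A) aplus).mulVec x = 0 →
        x = 0) ↔
      (∀ x : Fin N × Fin n → ℝ,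
        (∀ l < n * N,
            (Hbar * ((1 : Matrix (Fin N) (Fin N) ℝ) ⊗ₖ A) ^ l).mulVec x = 0) →
        (∀ i : Fin N,
            (∀ l < n, (C i * A ^ l).mulVec (fun j => x (i, j)) = 0) ∧
            (aeval A aplus).mulVec (fun j => x (i, j)) = 0) →
        x = 0) := by
  simp only [imp_and, forall_and, forall_lt_cbar_mul_one_kronecker_pow_mulVec_eq_zero_iff,
    aeval_one_kronecker, one_kronecker_mulVec_eq_zero_iff, and_imp]
  exact forall_congr' fun _ => forall_comm

/-- Lemma 1: the pair `([C̄', H̄']', Ā)` (with `Ā = I_N ⊗ A`) is detectable, i.e. its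
undetectable subspace `⋂_{l=1}^{nN} Ker([C̄;H̄]Ā^{l-1}) ∩ Ker α⁺_Ā(Ā)` is trivial,
if and only if the unobservable subspace of `(H̄, Ā)` intersects the Cartesian
product of the undetectable subspaces of the pairs `(C_i, A)` trivially.
Here `α_A = α⁻·α⁺` is the factorization of the minimal polynomial of `A` into its
stable and antistable factors (and, since `N ≥ 1`, `α_Ā = α_A`). -/
theorem detectable_iff_unobs_inter_prod_undet {n N : ℕ} (hN : 0 < N)
    (A : Matrix (Fin n) (Fin n) ℝ)
    (m : Fin N → ℕ) (C : ∀ i, Matrix (Fin (m i)) (Fin n) ℝ)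
    {q : ℕ} (Hbar : Matrix (Fin q) (Fin N × Fin n) ℝ)
    (aminus aplus : Polynomial ℝ)
    (hmonicm : aminus.Monic) (hmonicp : aplus.Monic)
    (hfact : minpoly ℝ A = aminus * aplus)
    (hminus : ∀ μ ∈ (aminus.map (algebraMap ℝ ℂ)).roots, μ.re < 0)
    (hplus : ∀ μ ∈ (aplus.map (algebraMap ℝ ℂ)).roots, 0 ≤ μ.re) :
    (∀ x : Fin N × Fin n → ℝ,
        (∀ l < n * N,
            (Cbar m C * ((1 : Matrix (Fin N) (Fin N) ℝ) ⊗ₖ A) ^ l).mulVec x = 0 ∧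
            (Hbar * ((1 : Matrix (Fin N) (Fin N) ℝ) ⊗ₖ A) ^ l).mulVec x = 0) →
        (aeval ((1 : Matrix (Fin N) (Fin N) ℝ) ⊗ₖ A) aplus).mulVec x = 0 →
        x = 0) ↔
      (∀ x : Fin N × Fin n → ℝ,
        (∀ l < n * N,
            (Hbar * ((1 : Matrix (Fin N) (Fin N) ℝ) ⊗ₖ A) ^ l).mulVec x = 0) →
        (∀ i : Fin N,
            (∀ l < n, (C i * A ^ l).mulVec (fun j => x (i, j)) = 0) ∧
            (aeval A aplus).mulVec (fun j => x (i, j)) = 0) →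
        x = 0) :=
  detectable_iff_unobs_inter_prod_undet_general A m C Hbar aplus
end

section
/- Suppose Ker L = span{1_N} and the pair ([C̄', (L⊗H)']', I_N ⊗ A) is detectable. Then ⋂_{i=1}^N C_i^u = {0}. -/
open Matrix Kronecker Polynomial

lemma kron_mulVec_lift {n N : ℕ} (B : Matrix (Fin n) (Fin n) ℝ) (v : Fin n → ℝ) :
    ((1 : Matrix (Fin N) (Fin N) ℝ) ⊗ₖ B).mulVec (fun p => v p.2)
      = fun p => B.mulVec v p.2 := by
  funext p
  simp only [mulVec, dotProduct, Fintype.sum_prod_type, kroneckerMap_apply, one_apply,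
    ite_mul, one_mul, zero_mul]
  simp [Finset.sum_ite_eq]

lemma kron_pow {n N : ℕ} (B : Matrix (Fin n) (Fin n) ℝ) (l : ℕ) :
    ((1 : Matrix (Fin N) (Fin N) ℝ) ⊗ₖ B) ^ l = (1 : Matrix (Fin N) (Fin N) ℝ) ⊗ₖ (B ^ l) := by
  induction l with
  | zero => simp [Matrix.one_kronecker_one]
  | succ k ih => rw [pow_succ, pow_succ, ih, ← Matrix.mul_kronecker_mul, Matrix.one_mul]


lemma sum_mulVec' {ι p q : Type*} [Fintype q] (s : Finset ι)
    (M : ι → Matrix p q ℝ) (v : q → ℝ) :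
    (∑ i ∈ s, M i).mulVec v = ∑ i ∈ s, (M i).mulVec v := by
  funext j
  simp only [Matrix.mulVec, dotProduct, Finset.sum_apply, Matrix.sum_apply, Finset.sum_mul]
  rw [Finset.sum_comm]

lemma obs_ext {n m' : ℕ} (A : Matrix (Fin n) (Fin n) ℝ) (C' : Matrix (Fin m') (Fin n) ℝ)
    (v : Fin n → ℝ) (h : ∀ l < n, (C' * A ^ l).mulVec v = 0) :
    ∀ l, (C' * A ^ l).mulVec v = 0 := by
  by_cases hn : n = 0
  · subst hn
    have hv : v = 0 := Subsingleton.elim v 0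
    intro l; rw [hv, mulVec_zero]
  · have hA : A ^ n = ∑ k ∈ Finset.range n, (-(A.charpoly.coeff k)) • A ^ k := by
      have h0 := A.aeval_self_charpoly
      rw [Polynomial.aeval_eq_sum_range] at h0
      rw [A.charpoly_natDegree_eq_dim, Fintype.card_fin, Finset.sum_range_succ] at h0
      have hc : A.charpoly.coeff n = 1 := by
        have hd : A.charpoly.natDegree = n := by
          rw [A.charpoly_natDegree_eq_dim, Fintype.card_fin]
        simpa [hd] using A.charpoly_monic.coeff_natDegree
      rw [hc, one_smul] at h0
      have h1 : A ^ n = -∑ k ∈ Finset.range n, A.charpoly.coeff k • A ^ k :=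
        eq_neg_of_add_eq_zero_right h0
      rw [h1, ← Finset.sum_neg_distrib]
      exact Finset.sum_congr rfl fun k _ => by rw [neg_smul]
    intro l
    induction l using Nat.strong_induction_on with
    | _ l ih =>
      by_cases hl : l < n
      · exact h l hl
      · push_neg at hl
        have hls : l = (l - n) + n := (Nat.sub_add_cancel hl).symm
        rw [hls, pow_add, hA, Finset.mul_sum, Matrix.mul_sum, sum_mulVec' _ (fun k => C' * (A ^ (l - n) * -A.charpoly.coeff k • A ^ k)) v]
        refine Finset.sum_eq_zero fun k hk => ?_
        have hterm : C' * (A ^ (l - n) * (-A.charpoly.coeff k • A ^ k))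
            = (-A.charpoly.coeff k) • (C' * A ^ (l - n + k)) := by
          rw [pow_add, Matrix.mul_smul, Matrix.mul_smul]
        rw [hterm, Matrix.smul_mulVec, ih (l - n + k) (by
          have : k < n := Finset.mem_range.mp hk
          omega), smul_zero]

lemma aeval_kron_mulVec {n N : ℕ} (A : Matrix (Fin n) (Fin n) ℝ) (p : Polynomial ℝ)
    (v : Fin n → ℝ) :
    (aeval ((1 : Matrix (Fin N) (Fin N) ℝ) ⊗ₖ A) p).mulVec (fun q => v q.2)
      = fun q => (aeval A p).mulVec v q.2 := by
  rw [Polynomial.aeval_eq_sum_range, Polynomial.aeval_eq_sum_range, sum_mulVec']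
  funext q
  simp only [Finset.sum_apply, Matrix.smul_mulVec, Pi.smul_apply, kron_pow,
    kron_mulVec_lift, sum_mulVec']

lemma Cbar_mulVec {N n : ℕ} (m : Fin N → ℕ) (C : ∀ i, Matrix (Fin (m i)) (Fin n) ℝ)
    (w : Fin n → ℝ) :
    (Cbar m C).mulVec (fun p : Fin N × Fin n => w p.2)
      = fun p : (i : Fin N) × Fin (m i) => (C p.1).mulVec w p.2 := by
  funext p
  simp only [mulVec, dotProduct, Fintype.sum_prod_type, Cbar, Matrix.of_apply, ite_mul, zero_mul]
  simp [Finset.sum_ite_eq]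

lemma LH_mulVec {N n mH : ℕ} (L : Matrix (Fin N) (Fin N) ℝ) (H : Matrix (Fin mH) (Fin n) ℝ)
    (hrow : ∀ i, ∑ j, L i j = 0) (w : Fin n → ℝ) :
    (L ⊗ₖ H).mulVec (fun p : Fin N × Fin n => w p.2) = 0 := by
  funext p
  simp only [mulVec, dotProduct, Fintype.sum_prod_type, kroneckerMap_apply, Pi.zero_apply]
  calc ∑ j, ∑ s, L p.1 j * H p.2 s * w s
      = ∑ j, L p.1 j * ∑ s, H p.2 s * w s := by
        refine Finset.sum_congr rfl fun j _ => ?_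
        rw [Finset.mul_sum]; exact Finset.sum_congr rfl fun s _ => by ring
    _ = (∑ j, L p.1 j) * ∑ s, H p.2 s * w s := by rw [Finset.sum_mul]
    _ = 0 := by rw [hrow, zero_mul]


/-- Theorem 1(i): if `Ker L = span{1_N}` and the pair `([C̄', (L⊗H)']', I_N ⊗ A)`
is detectable, then `⋂_{i=1}^N C_iᵘ = {0}`, where `C_iᵘ` is the undetectable
subspace of `(C_i, A)`. -/
theorem inter_undet_trivial_of_detectable {n N mH : ℕ} (hN : 0 < N)
    (A : Matrix (Fin n) (Fin n) ℝ)
    (m : Fin N → ℕ) (C : ∀ i, Matrix (Fin (m i)) (Fin n) ℝ)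
    (H : Matrix (Fin mH) (Fin n) ℝ) (L : Matrix (Fin N) (Fin N) ℝ)
    (aminus aplus : Polynomial ℝ)
    (hmonicm : aminus.Monic) (hmonicp : aplus.Monic)
    (hfact : minpoly ℝ A = aminus * aplus)
    (hminus : ∀ μ ∈ (aminus.map (algebraMap ℝ ℂ)).roots, μ.re < 0)
    (hplus : ∀ μ ∈ (aplus.map (algebraMap ℝ ℂ)).roots, 0 ≤ μ.re)
    (hKerL : ∀ b : Fin N → ℝ, L.mulVec b = 0 ↔ ∃ c : ℝ, b = fun _ => c)
    (hdet : ∀ x : Fin N × Fin n → ℝ,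
      (∀ l < n * N,
          (Cbar m C * ((1 : Matrix (Fin N) (Fin N) ℝ) ⊗ₖ A) ^ l).mulVec x = 0 ∧
          ((L ⊗ₖ H) * ((1 : Matrix (Fin N) (Fin N) ℝ) ⊗ₖ A) ^ l).mulVec x = 0) →
      (aeval ((1 : Matrix (Fin N) (Fin N) ℝ) ⊗ₖ A) aplus).mulVec x = 0 →
      x = 0) :
    ∀ v : Fin n → ℝ,
      (∀ i : Fin N,
        (∀ l < n, (C i * A ^ l).mulVec v = 0) ∧ (aeval A aplus).mulVec v = 0) →
      v = 0 := by
  intro v hv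
  set i0 : Fin N := ⟨0, hN⟩
  have haplus : (aeval A aplus).mulVec v = 0 := (hv i0).2
  have hobs : ∀ i l, (C i * A ^ l).mulVec v = 0 := fun i => obs_ext A (C i) v (hv i).1
  have hrow : ∀ i, ∑ j, L i j = 0 := by
    have h1 := (hKerL (fun _ => 1)).mpr ⟨1, rfl⟩
    intro i
    have := congrFun h1 i
    simpa [mulVec, dotProduct] using this
  have hx : (fun p : Fin N × Fin n => v p.2) = 0 := by
    refine hdet _ (fun l _ => ⟨?_, ?_⟩) ?_
    · rw [← Matrix.mulVec_mulVec, kron_pow, kron_mulVec_lift, Cbar_mulVec]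
      funext p
      have := congrFun (hobs p.1 l) p.2
      rwa [← Matrix.mulVec_mulVec] at this
    · rw [← Matrix.mulVec_mulVec, kron_pow, kron_mulVec_lift, LH_mulVec L H hrow]
    · rw [aeval_kron_mulVec, haplus]
      rfl
  funext j
  exact congrFun hx (i0, j)
end
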